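/- If (μ_t)_{t∈ℕ₀} solves the migration-recombination equation, then for every nonempty U ⊆ [n] the marginal process (μ_t^U) satisfies the marginal MRE: μ_{t+1}^U = ∑_{𝛅∈LS(U)} p^U_𝛅 R^U_𝛅(μ_t^U), where p^U_𝛅 := ∑_{𝛅'∈LS([n]): 𝛅'|_U = 𝛅} p_{𝛅'}. -/
import Mathlib


open scoped Classical

variable {n : ℕ}

/-- `P` is a partition of the finite set `U` of sites. -/
def IsPartition (U : Finset (Fin n)) (P : Finset (Finset (Fin n))) : Prop :=
  (∀ b ∈ P, b.Nonempty) ∧ (∀ b ∈ P, ∀ c ∈ P, b ≠ c → Disjoint b c) ∧ P.sup id = U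

/-- A labelled partition of `U` (with labels in `L`), encoded as a finite set of
(block, label) pairs whose blocks form a partition of `U`. -/
def IsLabelledPartition {L : Type*} (U : Finset (Fin n)) (D : Finset (Finset (Fin n) × L)) : Prop :=
  IsPartition U (D.image Prod.fst) ∧ ∀ p ∈ D, ∀ q ∈ D, p.1 = q.1 → p = q

/-- The induced labelled partition `𝛅|_V`. -/
noncomputable def restrictL {L : Type*} (D : Finset (Finset (Fin n) × L)) (V : Finset (Fin n)) :
    Finset (Finset (Fin n) × L) :=
  (D.image fun p => (p.1 ∩ V, p.2)).filter fun p => p.1.Nonempty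

/-- The induced (unlabelled) partition `δ|_V`. -/
def restrictP (P : Finset (Finset (Fin n))) (V : Finset (Fin n)) : Finset (Finset (Fin n)) :=
  (P.image fun d => d ∩ V).filter fun d => d.Nonempty

/-- `𝛆` is finer than `𝛅` (the base of `𝛆` refines the base of `𝛅`). -/
def RefinesL {L : Type*} (E D : Finset (Finset (Fin n) × L)) : Prop :=
  ∀ p ∈ E, ∃ q ∈ D, p.1 ⊆ q.1

/-- `ε` refines `δ` for unlabelled partitions. -/
def RefinesP (Q P : Finset (Finset (Fin n))) : Prop :=
  ∀ e ∈ Q, ∃ d ∈ P, e ⊆ d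

/-- Configurations (marginal types) over a subset `U` of sites. -/
abbrev Cfg (A : Fin n → Type*) (U : Finset (Fin n)) : Type _ :=
  ∀ i : U, A i.1

/-- Restriction of a configuration to a smaller index set. -/
def res (A : Fin n → Type*) {U V : Finset (Fin n)} (h : V ⊆ U) (x : Cfg A U) : Cfg A V :=
  fun i => x ⟨i.1, h i.2⟩

/-- Marginal of a measure (as a function on configurations) with respect to `V ⊆ U`. -/
noncomputable def marg (A : Fin n → Type*) [∀ i, Fintype (A i)]
    {U V : Finset (Fin n)} (h : V ⊆ U) (ν : Cfg A U → ℝ) : Cfg A V → ℝ :=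
  fun x => ∑ y : Cfg A U, if res A h y = x then ν y else 0

/-- The labelled recombinator `R^U_𝛅(ν) = ⊗_{(d,λ)∈𝛅} ν^d(λ)`, evaluated pointwise. -/
noncomputable def recomb (A : Fin n → Type*) [∀ i, Fintype (A i)] {L : Type*}
    {U : Finset (Fin n)} (D : Finset (Finset (Fin n) × L)) (ν : L → Cfg A U → ℝ) :
    Cfg A U → ℝ :=
  fun x => ∏ p ∈ D, marg A (Finset.inter_subset_right : p.1 ∩ U ⊆ U) (ν p.2)
      (res A (Finset.inter_subset_right : p.1 ∩ U ⊆ U) x)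

/-- The finite set of all partitions of `U`. -/
noncomputable def partitionsOf (U : Finset (Fin n)) : Finset (Finset (Finset (Fin n))) :=
  Finset.univ.filter fun P => IsPartition U P

/-- The finite set of all labelled partitions of `U` with labels in `L`. -/
noncomputable def lpartitionsOf (L : Type*) [Fintype L] (U : Finset (Fin n)) :
    Finset (Finset (Finset (Fin n) × L)) :=
  Finset.univ.filter fun D => IsLabelledPartition U D

/-- The migration-recombination probability `p_𝛅(α) = r_δ ∏_{(d,λ)∈𝛅} M(α,λ)`. -/
def pmr {L : Type*} (M : L → L → ℝ) (r : Finset (Finset (Fin n)) → ℝ)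
    (D : Finset (Finset (Fin n) × L)) (α : L) : ℝ :=
  r (D.image Prod.fst) * ∏ p ∈ D, M α p.2

/-- One step of the migration-recombination equation (MRE), evaluated pointwise:
`μ'(α) = ∑_δ r_δ ⊗_{d∈δ} ∑_β M(α,β) μ^d(β)`. -/
noncomputable def MREstep (A : Fin n → Type*) [∀ i, Fintype (A i)] {L : Type*} [Fintype L]
    (M : L → L → ℝ) (r : Finset (Finset (Fin n)) → ℝ)
    (μ : L → Cfg A Finset.univ → ℝ) (α : L) : Cfg A Finset.univ → ℝ :=
  fun x => ∑ P ∈ partitionsOf (Finset.univ : Finset (Fin n)), r P *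
    ∏ d ∈ P, ∑ β : L, M α β *
      marg A (Finset.subset_univ d) (μ β) (res A (Finset.subset_univ d) x)

/-- The marginal migration-recombination probability
`p^U_𝛅(α) = ∑_{𝛅' : 𝛅'|_U = 𝛅} p_{𝛅'}(α)`. -/
noncomputable def pmrMarg {L : Type*} [Fintype L] (M : L → L → ℝ)
    (r : Finset (Finset (Fin n)) → ℝ) (U : Finset (Fin n))
    (D : Finset (Finset (Fin n) × L)) (α : L) : ℝ :=
  ∑ D' ∈ (lpartitionsOf L (Finset.univ : Finset (Fin n))).filter
      (fun D' => restrictL D' U = D), pmr M r D' α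


section auxiliary

set_option maxHeartbeats 1000000
set_option linter.unusedSectionVars false

lemma mem_lpart {L : Type*} [Fintype L] {U : Finset (Fin n)} {D : Finset (Finset (Fin n) × L)} :
    D ∈ lpartitionsOf L U ↔ IsLabelledPartition U D := by
  rw [lpartitionsOf, Finset.mem_filter]
  simp

lemma mem_part {U : Finset (Fin n)} {P : Finset (Finset (Fin n))} :
    P ∈ partitionsOf U ↔ IsPartition U P := by
  rw [partitionsOf, Finset.mem_filter]
  simp

variable (A : Fin n → Type*) [∀ i, Fintype (A i)]

lemma res_res {U V W : Finset (Fin n)} (h1 : V ⊆ U) (h2 : W ⊆ V) (y : Cfg A U) :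
    res A h2 (res A h1 y) = res A (h2.trans h1) y := rfl

lemma marg_marg {U V W : Finset (Fin n)} (h1 : V ⊆ U) (h2 : W ⊆ V) (ν : Cfg A U → ℝ) :
    marg A h2 (marg A h1 ν) = marg A (h2.trans h1) ν := by
  funext x
  show (∑ z : Cfg A V, if res A h2 z = x then
      ∑ y : Cfg A U, if res A h1 y = z then ν y else 0 else 0) = _
  calc (∑ z : Cfg A V, if res A h2 z = x then
          ∑ y : Cfg A U, if res A h1 y = z then ν y else 0 else 0)
      = ∑ z : Cfg A V, ∑ y : Cfg A U, if res A h1 y = z ∧ res A h2 z = x then ν y else 0 := by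
        refine Finset.sum_congr rfl fun z _ => ?_
        split
        · next hz => exact Finset.sum_congr rfl fun y _ => by simp [hz]
        · next hz => exact (Finset.sum_eq_zero fun y _ => by simp [hz]).symm
    _ = ∑ y : Cfg A U, ∑ z : Cfg A V, if res A h1 y = z ∧ res A h2 z = x then ν y else 0 :=
        Finset.sum_comm
    _ = ∑ y : Cfg A U, if res A (h2.trans h1) y = x then ν y else 0 := by
        refine Finset.sum_congr rfl fun y _ => ?_
        rw [Finset.sum_eq_single (res A h1 y)]
        · simp [res_res]
        · intro z _ hz; exact if_neg fun hc => hz hc.1.symm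
        · intro h; exact absurd (Finset.mem_univ _) h

lemma cfg_subsingleton {V : Finset (Fin n)} (hV : V = ∅) (a b : Cfg A V) : a = b := by
  funext i
  exact absurd i.2 (by simp [hV])

lemma marg_empty {U V : Finset (Fin n)} (h : V ⊆ U) (hV : V = ∅) (ν : Cfg A U → ℝ)
    (z : Cfg A V) : marg A h ν z = ∑ y, ν y :=
  Finset.sum_congr rfl fun y _ => if_pos (cfg_subsingleton A hV _ _)

lemma marg_res_congr {U V V' : Finset (Fin n)} (hVV' : V = V') (h : V ⊆ U) (h' : V' ⊆ U)
    (ν : Cfg A U → ℝ) (x : Cfg A U) :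
    marg A h ν (res A h x) = marg A h' ν (res A h' x) := by subst hVV'; rfl

lemma marg_res_congr' {W U V V' : Finset (Fin n)} (hVV' : V = V') (hV : V ⊆ W) (hV' : V' ⊆ W)
    (hVU : V ⊆ U) (hV'U : V' ⊆ U) (ν : Cfg A W → ℝ) (x : Cfg A U) :
    marg A hV ν (res A hVU x) = marg A hV' ν (res A hV'U x) := by subst hVV'; rfl

lemma marg_sum {U V : Finset (Fin n)} (h : V ⊆ U) (ν : Cfg A U → ℝ) :
    ∑ z : Cfg A V, marg A h ν z = ∑ y : Cfg A U, ν y := by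
  unfold marg
  rw [Finset.sum_comm]
  refine Finset.sum_congr rfl fun y _ => ?_
  rw [Finset.sum_eq_single (res A h y)] <;> simp +contextual [eq_comm]

lemma fiber_sum {L : Type*} [Fintype L] {W : Finset (Fin n)} {P : Finset (Finset (Fin n))}
    (hPmem : IsPartition W P) (s : Finset (Finset (Finset (Fin n) × L)))
    (hs : ∀ D, D ∈ s ↔ IsLabelledPartition W D ∧ D.image Prod.fst = P)
    (F : Finset (Fin n) → L → ℝ) :
    ∑ D ∈ s, ∏ p ∈ D, F p.1 p.2 = ∏ d ∈ P, ∑ β : L, F d β := by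
  rw [Finset.prod_sum]
  have ex : ∀ D ∈ s, ∀ d ∈ P, ∃ p, p ∈ D ∧ p.1 = d := by
    intro D hD d hd
    rw [← ((hs D).mp hD).2] at hd
    exact Finset.mem_image.mp hd
  have hj : ∀ (ℓ : (a : Finset (Fin n)) → a ∈ P → L),
      (P.attach.image fun d => (d.1, ℓ d.1 d.2)) ∈ s := by
    intro ℓ
    have him : (P.attach.image fun d => (d.1, ℓ d.1 d.2)).image Prod.fst = P := by
      rw [Finset.image_image]
      exact Finset.attach_image_val
    refine (hs _).mpr ⟨⟨by rw [him]; exact hPmem, ?_⟩, him⟩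
    intro p hp q hq hpq
    obtain ⟨a, _, rfl⟩ := Finset.mem_image.mp hp
    obtain ⟨b, _, rfl⟩ := Finset.mem_image.mp hq
    have hab : a = b := Subtype.ext hpq
    subst hab; rfl
  have hji : ∀ D (hD : D ∈ s),
      (P.attach.image fun d : {x // x ∈ P} => (d.1, (ex D hD d.1 d.2).choose.2)) = D := by
    intro D hD
    apply Finset.Subset.antisymm
    · intro p hp
      obtain ⟨a, _, rfl⟩ := Finset.mem_image.mp hp
      have hspec := (ex D hD a.1 a.2).choose_spec
      have heq : (a.1, (ex D hD a.1 a.2).choose.2) = (ex D hD a.1 a.2).choose :=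
        Prod.ext hspec.2.symm rfl
      rw [heq]; exact hspec.1
    · intro p hp
      have hD' := (hs D).mp hD
      have hfun := hD'.1.2
      have hp1 : p.1 ∈ P := by
        rw [← hD'.2]; exact Finset.mem_image_of_mem _ hp
      refine Finset.mem_image.mpr ⟨⟨p.1, hp1⟩, Finset.mem_attach _ _, ?_⟩
      have hspec := (ex D hD p.1 hp1).choose_spec
      have heq : (ex D hD p.1 hp1).choose = p := hfun _ hspec.1 p hp hspec.2
      have h2 : (ex D hD p.1 hp1).choose.2 = p.2 := congrArg Prod.snd heq
      show ((⟨p.1, hp1⟩ : {x // x ∈ P}).1, (ex D hD p.1 hp1).choose.2) = p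
      rw [h2]
  refine Finset.sum_bij'
    (i := fun D hD => fun d hd => (ex D hD d hd).choose.2)
    (j := fun ℓ _ => P.attach.image fun d => (d.1, ℓ d.1 d.2)) ?_ ?_ ?_ ?_ ?_
  · intro D hD
    simp [Finset.mem_pi]
  · intro ℓ _
    exact hj ℓ
  · intro D hD
    exact hji D hD
  · intro ℓ hℓ
    funext d hd
    have hmem := hj ℓ
    have hspec := (ex _ hmem d hd).choose_spec
    obtain ⟨a, _, ha⟩ := Finset.mem_image.mp hspec.1
    have had : a.1 = d := by rw [← hspec.2, ← ha]
    have haa : a = ⟨d, hd⟩ := Subtype.ext had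
    subst haa
    exact (congrArg Prod.snd ha).symm
  · intro D hD
    have hinj : ∀ a ∈ P.attach, ∀ b ∈ P.attach,
        (fun d : {x // x ∈ P} => (d.1, (ex D hD d.1 d.2).choose.2)) a
          = (fun d : {x // x ∈ P} => (d.1, (ex D hD d.1 d.2).choose.2)) b → a = b := by
      intro a _ b _ hab
      exact Subtype.ext (congrArg Prod.fst hab)
    conv_lhs => rw [← hji D hD]
    rw [Finset.prod_image hinj]

lemma label_sum {L : Type*} [Fintype L] (c : Finset (Finset (Fin n)) → ℝ)
    (F : Finset (Fin n) → L → ℝ) (W : Finset (Fin n)) :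
    ∑ D ∈ lpartitionsOf L W, c (D.image Prod.fst) * ∏ p ∈ D, F p.1 p.2
      = ∑ P ∈ partitionsOf W, c P * ∏ d ∈ P, ∑ β : L, F d β := by
  have hmaps : ∀ D ∈ lpartitionsOf L W, D.image Prod.fst ∈ partitionsOf W :=
    fun D hD => mem_part.mpr (mem_lpart.mp hD).1
  rw [← Finset.sum_fiberwise_of_maps_to hmaps]
  refine Finset.sum_congr rfl fun P hP => ?_
  have hPmem : IsPartition W P := mem_part.mp hP
  rw [← fiber_sum hPmem ((lpartitionsOf L W).filter (fun D => D.image Prod.fst = P))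
      (fun D => by rw [Finset.mem_filter, mem_lpart]) F, Finset.mul_sum]
  refine Finset.sum_congr rfl fun D hD => ?_
  rw [(Finset.mem_filter.mp hD).2]

lemma block_cover {L : Type*} {W : Finset (Fin n)} {D : Finset (Finset (Fin n) × L)}
    (hD : IsLabelledPartition W D) {i : Fin n} (hi : i ∈ W) : ∃ p, p ∈ D ∧ i ∈ p.1 := by
  have h := hD.1.2.2
  rw [← h] at hi
  rw [Finset.mem_sup] at hi
  obtain ⟨b, hb, hib⟩ := hi
  obtain ⟨p, hp, rfl⟩ := Finset.mem_image.mp hb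
  exact ⟨p, hp, hib⟩

lemma block_eq {L : Type*} {W : Finset (Fin n)} {D : Finset (Finset (Fin n) × L)}
    (hD : IsLabelledPartition W D) {p q : Finset (Fin n) × L} (hp : p ∈ D) (hq : q ∈ D)
    {i : Fin n} (hip : i ∈ p.1) (hiq : i ∈ q.1) : p = q := by
  by_contra h
  have h1 : p.1 ≠ q.1 := fun he => h (hD.2 p hp q hq he)
  have hdisj := hD.1.2.1 p.1 (Finset.mem_image_of_mem _ hp) q.1
    (Finset.mem_image_of_mem _ hq) h1
  exact absurd hiq (Finset.disjoint_left.mp hdisj hip)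

lemma pi_factor {L : Type*} (D : Finset (Finset (Fin n) × L))
    (g : (p : Finset (Fin n) × L) → Cfg A p.1 → ℝ) :
    ∑ f : (p : {q // q ∈ D}) → Cfg A p.1.1, ∏ p ∈ D.attach, g p.1 (f p)
      = ∏ p ∈ D.attach, ∑ z : Cfg A p.1.1, g p.1 z := by
  rw [← Finset.univ_eq_attach]
  exact (Fintype.prod_sum _).symm

lemma factor {L : Type*} {U : Finset (Fin n)} (x : Cfg A U) {D : Finset (Finset (Fin n) × L)}
    (hD : IsLabelledPartition (Finset.univ : Finset (Fin n)) D)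
    (H : (p : Finset (Fin n) × L) → Cfg A p.1 → ℝ) :
    ∑ y : Cfg A Finset.univ, (if res A (Finset.subset_univ U) y = x
        then ∏ p ∈ D, H p (res A (Finset.subset_univ p.1) y) else 0)
    = ∏ p ∈ D, marg A (Finset.inter_subset_left : p.1 ∩ U ⊆ p.1) (H p)
        (res A (Finset.inter_subset_right : p.1 ∩ U ⊆ U) x) := by
  have cover : ∀ i : Fin n, ∃ p, p ∈ D ∧ i ∈ p.1 :=
    fun i => block_cover hD (Finset.mem_univ i)
  let e : Cfg A Finset.univ ≃ ((p : {q // q ∈ D}) → Cfg A p.1.1) :=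
  { toFun := fun y p => res A (Finset.subset_univ p.1.1) y
    invFun := fun f i => f ⟨(cover i.1).choose, (cover i.1).choose_spec.1⟩
        ⟨i.1, (cover i.1).choose_spec.2⟩
    left_inv := by
      intro y; funext i; rfl
    right_inv := by
      intro f
      funext p i
      show f ⟨(cover i.1).choose, (cover i.1).choose_spec.1⟩ ⟨i.1, (cover i.1).choose_spec.2⟩
        = f p i
      have aux : ∀ (q1 q2 : {q // q ∈ D}), q1 = q2 → ∀ (j : Fin n) (h1 : j ∈ q1.1.1)
          (h2 : j ∈ q2.1.1), f q1 ⟨j, h1⟩ = f q2 ⟨j, h2⟩ := by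
        rintro q1 q2 rfl j h1 h2
        rfl
      exact aux ⟨(cover i.1).choose, (cover i.1).choose_spec.1⟩ p
        (Subtype.ext (block_eq hD (cover i.1).choose_spec.1 p.2
          (cover i.1).choose_spec.2 i.2)) i.1 (cover i.1).choose_spec.2 i.2 }
  have cond_iff : ∀ y : Cfg A Finset.univ, res A (Finset.subset_univ U) y = x ↔
      ∀ p ∈ D, res A (Finset.inter_subset_left : p.1 ∩ U ⊆ p.1)
          (res A (Finset.subset_univ p.1) y)
        = res A (Finset.inter_subset_right : p.1 ∩ U ⊆ U) x := by
    intro y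
    constructor
    · intro hy p _
      funext i
      exact congrFun hy ⟨i.1, Finset.inter_subset_right i.2⟩
    · intro h
      funext i
      obtain ⟨p, hp, hip⟩ := cover i.1
      have hiU : i.1 ∈ p.1 ∩ U := Finset.mem_inter.mpr ⟨hip, i.2⟩
      exact congrFun (h p hp) ⟨i.1, hiU⟩
  calc ∑ y : Cfg A Finset.univ, (if res A (Finset.subset_univ U) y = x
        then ∏ p ∈ D, H p (res A (Finset.subset_univ p.1) y) else 0)
      = ∑ y : Cfg A Finset.univ, ∏ p ∈ D,
          (if res A (Finset.inter_subset_left : p.1 ∩ U ⊆ p.1)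
              (res A (Finset.subset_univ p.1) y)
            = res A (Finset.inter_subset_right : p.1 ∩ U ⊆ U) x
          then H p (res A (Finset.subset_univ p.1) y) else 0) := by
        refine Finset.sum_congr rfl fun y _ => ?_
        by_cases hy : res A (Finset.subset_univ U) y = x
        · rw [if_pos hy]
          exact Finset.prod_congr rfl fun p hp => (if_pos ((cond_iff y).mp hy p hp)).symm
        · rw [if_neg hy]
          have hne : ¬ ∀ p ∈ D, res A (Finset.inter_subset_left : p.1 ∩ U ⊆ p.1)
              (res A (Finset.subset_univ p.1) y)
            = res A (Finset.inter_subset_right : p.1 ∩ U ⊆ U) x :=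
            fun h => hy ((cond_iff y).mpr h)
          push_neg at hne
          obtain ⟨p, hp, hne⟩ := hne
          refine (Finset.prod_eq_zero (i := p) hp ?_).symm
          exact if_neg hne
    _ = ∑ f : (p : {q // q ∈ D}) → Cfg A p.1.1, ∏ p ∈ D.attach,
          (if res A (Finset.inter_subset_left : p.1.1 ∩ U ⊆ p.1.1) (f p)
            = res A (Finset.inter_subset_right : p.1.1 ∩ U ⊆ U) x
          then H p.1 (f p) else 0) := by
        rw [← Equiv.sum_comp e]
        refine Finset.sum_congr rfl fun y _ => ?_
        rw [← Finset.prod_attach D (fun p =>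
          (if res A (Finset.inter_subset_left : p.1 ∩ U ⊆ p.1)
              (res A (Finset.subset_univ p.1) y)
            = res A (Finset.inter_subset_right : p.1 ∩ U ⊆ U) x
          then H p (res A (Finset.subset_univ p.1) y) else 0))]
        rfl
    _ = ∏ p ∈ D.attach, marg A (Finset.inter_subset_left : p.1.1 ∩ U ⊆ p.1.1) (H p.1)
        (res A (Finset.inter_subset_right : p.1.1 ∩ U ⊆ U) x) :=
        pi_factor A D (fun p z => if res A (Finset.inter_subset_left : p.1 ∩ U ⊆ p.1) z
            = res A (Finset.inter_subset_right : p.1 ∩ U ⊆ U) x then H p z else 0)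
    _ = ∏ p ∈ D, marg A (Finset.inter_subset_left : p.1 ∩ U ⊆ p.1) (H p)
        (res A (Finset.inter_subset_right : p.1 ∩ U ⊆ U) x) :=
        Finset.prod_attach D (fun p => marg A (Finset.inter_subset_left : p.1 ∩ U ⊆ p.1)
          (H p) (res A (Finset.inter_subset_right : p.1 ∩ U ⊆ U) x))

lemma step_eq {L : Type*} [Fintype L] (M : L → L → ℝ) (r : Finset (Finset (Fin n)) → ℝ)
    (ν : L → Cfg A Finset.univ → ℝ) (α : L) (U : Finset (Fin n)) (x : Cfg A U) :
    marg A (Finset.subset_univ U) (MREstep A M r ν α) x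
      = ∑ D ∈ lpartitionsOf L (Finset.univ : Finset (Fin n)), pmr M r D α *
          ∏ p ∈ D, marg A (Finset.inter_subset_left : p.1 ∩ U ⊆ p.1)
            (marg A (Finset.subset_univ p.1) (ν p.2))
            (res A (Finset.inter_subset_right : p.1 ∩ U ⊆ U) x) := by
  have hstep : ∀ y : Cfg A Finset.univ, MREstep A M r ν α y
      = ∑ D ∈ lpartitionsOf L (Finset.univ : Finset (Fin n)), pmr M r D α *
          ∏ p ∈ D, marg A (Finset.subset_univ p.1) (ν p.2) (res A (Finset.subset_univ p.1) y) := by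
    intro y
    rw [MREstep]
    rw [← label_sum r (fun d β => M α β * marg A (Finset.subset_univ d) (ν β)
      (res A (Finset.subset_univ d) y)) Finset.univ]
    refine Finset.sum_congr rfl fun D _ => ?_
    rw [pmr, Finset.prod_mul_distrib, mul_assoc]
  show (∑ y : Cfg A Finset.univ, if res A (Finset.subset_univ U) y = x
      then MREstep A M r ν α y else 0) = _
  calc (∑ y : Cfg A Finset.univ, if res A (Finset.subset_univ U) y = x
        then MREstep A M r ν α y else 0)
      = ∑ y : Cfg A Finset.univ, ∑ D ∈ lpartitionsOf L (Finset.univ : Finset (Fin n)),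
          pmr M r D α * (if res A (Finset.subset_univ U) y = x
            then ∏ p ∈ D, marg A (Finset.subset_univ p.1) (ν p.2)
              (res A (Finset.subset_univ p.1) y) else 0) := by
        refine Finset.sum_congr rfl fun y _ => ?_
        by_cases hy : res A (Finset.subset_univ U) y = x
        · rw [if_pos hy, hstep y]
          exact Finset.sum_congr rfl fun D _ => by rw [if_pos hy]
        · rw [if_neg hy]
          exact (Finset.sum_eq_zero fun D _ => by rw [if_neg hy, mul_zero]).symm
    _ = ∑ D ∈ lpartitionsOf L (Finset.univ : Finset (Fin n)), pmr M r D α *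
          ∑ y : Cfg A Finset.univ, (if res A (Finset.subset_univ U) y = x
            then ∏ p ∈ D, marg A (Finset.subset_univ p.1) (ν p.2)
              (res A (Finset.subset_univ p.1) y) else 0) := by
        rw [Finset.sum_comm]
        exact Finset.sum_congr rfl fun D _ => (Finset.mul_sum _ _ _).symm
    _ = _ := by
        refine Finset.sum_congr rfl fun D hD => ?_
        rw [factor A x (mem_lpart.mp hD) (fun p => marg A (Finset.subset_univ p.1) (ν p.2))]

lemma pmr_total {L : Type*} [Fintype L] (M : L → L → ℝ) (hM1 : ∀ α, ∑ β, M α β = 1)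
    (r : Finset (Finset (Fin n)) → ℝ)
    (hr1 : ∑ P ∈ partitionsOf (Finset.univ : Finset (Fin n)), r P = 1) (α : L) :
    ∑ D ∈ lpartitionsOf L (Finset.univ : Finset (Fin n)), pmr M r D α = 1 := by
  have h := label_sum r (fun _ β => M α β) (Finset.univ : Finset (Fin n))
  calc ∑ D ∈ lpartitionsOf L (Finset.univ : Finset (Fin n)), pmr M r D α
      = ∑ P ∈ partitionsOf (Finset.univ : Finset (Fin n)), r P * ∏ d ∈ P, ∑ β : L, M α β := h
    _ = ∑ P ∈ partitionsOf (Finset.univ : Finset (Fin n)), r P := by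
        refine Finset.sum_congr rfl fun P _ => ?_
        rw [Finset.prod_congr rfl fun d _ => hM1 α, Finset.prod_const_one, mul_one]
    _ = 1 := hr1

lemma restrictL_isLP {L : Type*} {U : Finset (Fin n)} {D : Finset (Finset (Fin n) × L)}
    (hD : IsLabelledPartition (Finset.univ : Finset (Fin n)) D) :
    IsLabelledPartition U (restrictL D U) := by
  have hmem : ∀ q ∈ restrictL D U, q.1.Nonempty ∧ ∃ p ∈ D, (p.1 ∩ U, p.2) = q := by
    intro q hq
    rw [restrictL, Finset.mem_filter, Finset.mem_image] at hq
    exact ⟨hq.2, hq.1⟩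
  constructor
  · refine ⟨?_, ?_, ?_⟩
    · intro b hb
      obtain ⟨q, hq, rfl⟩ := Finset.mem_image.mp hb
      exact (hmem q hq).1
    · intro b hb c hc hbc
      obtain ⟨q, hq, rfl⟩ := Finset.mem_image.mp hb
      obtain ⟨q', hq', rfl⟩ := Finset.mem_image.mp hc
      obtain ⟨_, p, hp, rfl⟩ := hmem q hq
      obtain ⟨_, p', hp', rfl⟩ := hmem q' hq'
      have hpp' : p.1 ≠ p'.1 := by
        intro he
        exact hbc (by rw [he])
      have hdisj := hD.1.2.1 p.1 (Finset.mem_image_of_mem _ hp) p'.1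
        (Finset.mem_image_of_mem _ hp') hpp'
      rw [Finset.disjoint_left] at hdisj ⊢
      intro a ha ha'
      exact hdisj (Finset.mem_inter.mp ha).1 (Finset.mem_inter.mp ha').1
    · refine Finset.Subset.antisymm ?_ ?_
      · intro i hi
        obtain ⟨b, hb, hib⟩ := Finset.mem_sup.mp hi
        obtain ⟨q, hq, rfl⟩ := Finset.mem_image.mp hb
        obtain ⟨_, p, hp, rfl⟩ := hmem q hq
        exact Finset.inter_subset_right hib
      · intro i hi
        obtain ⟨p, hp, hip⟩ := block_cover hD (Finset.mem_univ i)
        have hiU : i ∈ p.1 ∩ U := Finset.mem_inter.mpr ⟨hip, hi⟩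
        have hq : (p.1 ∩ U, p.2) ∈ restrictL D U := by
          rw [restrictL, Finset.mem_filter]
          exact ⟨Finset.mem_image.mpr ⟨p, hp, rfl⟩, ⟨i, hiU⟩⟩
        exact Finset.mem_sup.mpr ⟨p.1 ∩ U, Finset.mem_image_of_mem _ hq, hiU⟩
  · intro q hq q' hq' hqq'
    obtain ⟨hne, p, hp, rfl⟩ := hmem q hq
    obtain ⟨_, p', hp', rfl⟩ := hmem q' hq'
    obtain ⟨i, hi⟩ := hne
    have hi' : i ∈ p'.1 ∩ U := by
      show i ∈ ((p'.1 ∩ U, p'.2) : Finset (Fin n) × L).1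
      rw [← hqq']
      exact hi
    have hpp' : p = p' := block_eq hD hp hp' (Finset.mem_inter.mp hi).1
      (Finset.mem_inter.mp hi').1
    rw [hpp']

end auxiliary

/-- if `(μ_t)` solves the MRE, then for every nonempty `U ⊆ [n]` the marginals
`(μ_t^U)` satisfy the marginal MRE `μ_{t+1}^U = ∑_{𝛅∈LS(U)} p^U_𝛅 R^U_𝛅(μ_t^U)`. -/
theorem marginal_MRE (A : Fin n → Type*) [∀ i, Fintype (A i)]
    {L : Type*} [Fintype L]
    (M : L → L → ℝ) (hM0 : ∀ α β, 0 ≤ M α β) (hM1 : ∀ α, ∑ β, M α β = 1)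
    (r : Finset (Finset (Fin n)) → ℝ) (hr0 : ∀ P, 0 ≤ r P)
    (hr1 : ∑ P ∈ partitionsOf (Finset.univ : Finset (Fin n)), r P = 1)
    (μ : ℕ → L → Cfg A Finset.univ → ℝ)
    (hμ0 : ∀ β, (∀ x, 0 ≤ μ 0 β x) ∧ ∑ x, μ 0 β x = 1)
    (hMRE : ∀ t α x, μ (t + 1) α x = MREstep A M r (μ t) α x)
    (U : Finset (Fin n)) (hU : U.Nonempty) :
    ∀ t α (x : Cfg A U),
      marg A (Finset.subset_univ U) (μ (t + 1) α) x =
        ∑ D ∈ lpartitionsOf L U, pmrMarg M r U D α *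
          recomb A D (fun β => marg A (Finset.subset_univ U) (μ t β)) x := by
  have mass : ∀ t β, ∑ y, μ t β y = 1 := by
    intro t
    induction t with
    | zero => exact fun β => (hμ0 β).2
    | succ t ih =>
      intro β
      have z : Cfg A (∅ : Finset (Fin n)) := fun i => absurd i.2 (Finset.notMem_empty _)
      calc ∑ y, μ (t + 1) β y
          = marg A (Finset.subset_univ ∅) (μ (t + 1) β) z := (marg_empty A _ rfl _ z).symm
        _ = marg A (Finset.subset_univ ∅) (MREstep A M r (μ t) β) z := by
            rw [show μ (t + 1) β = MREstep A M r (μ t) β from funext (hMRE t β)]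
        _ = ∑ D ∈ lpartitionsOf L (Finset.univ : Finset (Fin n)), pmr M r D β *
              ∏ p ∈ D, marg A (Finset.inter_subset_left : p.1 ∩ ∅ ⊆ p.1)
                (marg A (Finset.subset_univ p.1) (μ t p.2))
                (res A (Finset.inter_subset_right : p.1 ∩ ∅ ⊆ ∅) z) :=
            step_eq A M r (μ t) β ∅ z
        _ = ∑ D ∈ lpartitionsOf L (Finset.univ : Finset (Fin n)), pmr M r D β := by
            refine Finset.sum_congr rfl fun D _ => ?_
            rw [Finset.prod_congr rfl fun p _ => ?_, Finset.prod_const_one, mul_one]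
            rw [marg_empty A _ (Finset.inter_empty p.1), marg_sum, ih p.2]
        _ = 1 := pmr_total M hM1 r hr1 β
  intro t α x
  rw [show μ (t + 1) α = MREstep A M r (μ t) α from funext (hMRE t α),
    step_eq A M r (μ t) α U x]
  have hmaps : ∀ D ∈ lpartitionsOf L (Finset.univ : Finset (Fin n)),
      restrictL D U ∈ lpartitionsOf L U :=
    fun D hD => mem_lpart.mpr (restrictL_isLP (mem_lpart.mp hD))
  calc ∑ D ∈ lpartitionsOf L (Finset.univ : Finset (Fin n)), pmr M r D α *
          ∏ p ∈ D, marg A (Finset.inter_subset_left : p.1 ∩ U ⊆ p.1)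
            (marg A (Finset.subset_univ p.1) (μ t p.2))
            (res A (Finset.inter_subset_right : p.1 ∩ U ⊆ U) x)
      = ∑ D ∈ lpartitionsOf L (Finset.univ : Finset (Fin n)), pmr M r D α *
          recomb A (restrictL D U) (fun β => marg A (Finset.subset_univ U) (μ t β)) x := by
        refine Finset.sum_congr rfl fun D hD => ?_
        have hDlp := mem_lpart.mp hD
        congr 1
        rw [← Finset.prod_filter_mul_prod_filter_not D (fun p => (p.1 ∩ U).Nonempty)]
        have h1 : ∏ p ∈ D.filter (fun p => ¬(p.1 ∩ U).Nonempty),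
            marg A (Finset.inter_subset_left : p.1 ∩ U ⊆ p.1)
              (marg A (Finset.subset_univ p.1) (μ t p.2))
              (res A (Finset.inter_subset_right : p.1 ∩ U ⊆ U) x) = 1 := by
          refine Finset.prod_eq_one fun p hp => ?_
          have hV : p.1 ∩ U = ∅ :=
            Finset.not_nonempty_iff_eq_empty.mp (Finset.mem_filter.mp hp).2
          rw [marg_empty A _ hV, marg_sum, mass t p.2]
        rw [h1, mul_one]
        simp only [recomb]
        refine Finset.prod_bij (i := fun p _ => (p.1 ∩ U, p.2)) ?_ ?_ ?_ ?_
        · intro p hp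
          have hp' := Finset.mem_filter.mp hp
          rw [restrictL, Finset.mem_filter]
          exact ⟨Finset.mem_image.mpr ⟨p, hp'.1, rfl⟩, hp'.2⟩
        · intro p hp p' hp' he
          have hp1 := Finset.mem_filter.mp hp
          obtain ⟨i, hi⟩ := hp1.2
          have hi' : i ∈ p'.1 ∩ U := by
            have : (p.1 ∩ U : Finset (Fin n)) = p'.1 ∩ U := congrArg Prod.fst he
            rw [← this]; exact hi
          exact block_eq hDlp hp1.1 (Finset.mem_filter.mp hp').1
            (Finset.mem_inter.mp hi).1 (Finset.mem_inter.mp hi').1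
        · intro q hq
          rw [restrictL, Finset.mem_filter] at hq
          obtain ⟨p, hp, rfl⟩ := Finset.mem_image.mp hq.1
          exact ⟨p, Finset.mem_filter.mpr ⟨hp, hq.2⟩, rfl⟩
        · intro p hp
          rw [marg_marg A (Finset.subset_univ p.1) (Finset.inter_subset_left),
            marg_marg A (Finset.subset_univ U) Finset.inter_subset_right]
          refine marg_res_congr' A ?_ _ _ _ _ (μ t p.2) x
          rw [Finset.inter_assoc, Finset.inter_self]
    _ = ∑ D0 ∈ lpartitionsOf L U, ∑ D ∈ (lpartitionsOf L
          (Finset.univ : Finset (Fin n))).filter (fun D => restrictL D U = D0),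
          pmr M r D α * recomb A (restrictL D U)
            (fun β => marg A (Finset.subset_univ U) (μ t β)) x :=
        (Finset.sum_fiberwise_of_maps_to hmaps _).symm
    _ = ∑ D0 ∈ lpartitionsOf L U, pmrMarg M r U D0 α *
          recomb A D0 (fun β => marg A (Finset.subset_univ U) (μ t β)) x := by
        refine Finset.sum_congr rfl fun D0 _ => ?_
        rw [pmrMarg, Finset.sum_mul]
        refine Finset.sum_congr rfl fun D hD => ?_
        rw [(Finset.mem_filter.mp hD).2]
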